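/- For 0 < α < 1, 1 - α + 1/q = 1/p, 1 < p < q < ∞, and b a locally integrable function, the commutator with the dyadic Riesz potential satisfies ‖[M_b, I_α]‖_{L^p → L^q} ≳ sup_{I ∈ D} |⟨b, h_I⟩| / |I|^{1/2}. -/

import Mathlib

open MeasureTheory Set ENNReal

noncomputable section

/-- The dyadic interval `[j 2^k, (j+1) 2^k)`. -/
def dyadicI (k j : ℤ) : Set ℝ := Set.Ico ((j : ℝ) * 2 ^ k) (((j : ℝ) + 1) * 2 ^ k)

/-- The Haar function adapted to the dyadic interval `[j 2^k, (j+1) 2^k)`: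
`h_I = |I|^{-1/2} (-1_{I_-} + 1_{I_+})`. -/
def haarFn (k j : ℤ) : ℝ → ℝ := fun x =>
  ((2 : ℝ) ^ k) ^ (-(1 : ℝ) / 2) *
    (Set.indicator (dyadicI (k - 1) (2 * j + 1)) 1 x -
      Set.indicator (dyadicI (k - 1) (2 * j)) 1 x)

/-- The dyadic Riesz potential `I_α f = ∑_{K ∈ D} |K|^{-α} ⟨f, 1_K⟩ 1_K`. -/
def riesz (α : ℝ) (f : ℝ → ℝ) : ℝ → ℝ := fun x =>
  ∑' q : ℤ × ℤ, ((2 : ℝ) ^ q.1) ^ (-α) * (∫ y in dyadicI q.1 q.2, f y) *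
    Set.indicator (dyadicI q.1 q.2) 1 x

/-- The constant `c_α = ∑_{n=1}^∞ 2^{-n(1-α)}`. -/
def cst (α : ℝ) : ℝ := ∑' n : ℕ, (2 : ℝ) ^ (-((n : ℝ) + 1) * (1 - α))

/-- Dyadic BMO norm: sup over dyadic intervals J of
(|J|⁻¹ ∑_(I ⊆ J) |⟨b, h_I⟩|²)^(1/2). -/
def bmoNorm (b : ℝ → ℝ) : ℝ≥0∞ :=
  ⨆ J : ℤ × ℤ,
    ((ENNReal.ofReal ((2 : ℝ) ^ J.1))⁻¹ *
      ∑' I : {q : ℤ × ℤ // dyadicI q.1 q.2 ⊆ dyadicI J.1 J.2},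
        ENNReal.ofReal ((∫ y, b y * haarFn I.1.1 I.1.2 y) ^ 2)) ^ ((1 : ℝ) / 2)

/-- The norm of the commutator [M_b, I_α] as an operator from L^p to L^q. -/
def commN (α p q : ℝ) (b : ℝ → ℝ) : ℝ≥0∞ :=
  ⨆ f : {f : ℝ → ℝ // eLpNorm f (ENNReal.ofReal p) volume ≤ 1},
    eLpNorm (fun x => b x * riesz α f.1 x - riesz α (fun y => b y * f.1 y) x)
      (ENNReal.ofReal q) volume

/-- sup over dyadic intervals I of |⟨b, h_I⟩| / |I|^(1/2). -/
def haarSup (b : ℝ → ℝ) : ℝ≥0∞ :=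
  ⨆ I : ℤ × ℤ,
    ENNReal.ofReal (|∫ y, b y * haarFn I.1 I.2 y| * ((2 : ℝ) ^ I.1) ^ (-(1 : ℝ) / 2))

/-- The function h¹_I = |I|^(-1/2) 1_I. -/
def haarOne (k j : ℤ) : ℝ → ℝ := fun x =>
  ((2 : ℝ) ^ k) ^ (-(1 : ℝ) / 2) * Set.indicator (dyadicI k j) 1 x

/-- The Haar paraproduct B(f₁,f₂) = ∑_I |I|^(-1/2) ⟨f₁,h_I⟩ ⟨f₂,h¹_I⟩ h_I. -/
def paraB (f₁ f₂ : ℝ → ℝ) : ℝ → ℝ := fun x =>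
  ∑' q : ℤ × ℤ,
    ((2 : ℝ) ^ q.1) ^ (-(1 : ℝ) / 2) * (∫ y, f₁ y * haarFn q.1 q.2 y) *
      (∫ y, f₂ y * haarOne q.1 q.2 y) * haarFn q.1 q.2 x

/-- The Haar projection onto scale 2^n: P_n f = ∑_(|I|=2^n) ⟨f,h_I⟩ h_I. -/
def projP (n : ℤ) (f : ℝ → ℝ) : ℝ → ℝ := fun x =>
  ∑' j : ℤ, (∫ y, f y * haarFn n j y) * haarFn n j x

/-- The shifted paraproduct D_k(f₁,f₂) = ∑_n (P_n f₁)(P_(n+k) f₂). -/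
def paraD (k : ℕ) (f₁ f₂ : ℝ → ℝ) : ℝ → ℝ := fun x =>
  ∑' n : ℤ, projP n f₁ x * projP (n + k) f₂ x






lemma two_zpow_pos (k : ℤ) : (0:ℝ) < 2 ^ k := zpow_pos (by norm_num) k

lemma dyadic_meas (k j : ℤ) : MeasurableSet (dyadicI k j) := measurableSet_Ico

lemma dyadic_vol (k j : ℤ) : volume (dyadicI k j) = ENNReal.ofReal ((2:ℝ)^k) := by
  rw [dyadicI, Real.volume_Ico]; congr 1; ring

lemma dyadic_subset_iff {a b : ℤ} (hab : a ≤ b) (i l : ℤ) :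
    dyadicI a i ⊆ dyadicI b l ↔ l * 2 ^ (b - a).toNat ≤ i ∧ i + 1 ≤ (l + 1) * 2 ^ (b - a).toNat := by
  have hpa := two_zpow_pos a
  set e := (b - a).toNat with hedef
  have he : (e : ℤ) = b - a := Int.toNat_of_nonneg (sub_nonneg.2 hab)
  have h2 : (2:ℝ) ^ b = (2:ℝ) ^ a * (2:ℝ) ^ e := by
    have hb' : b = a + (e : ℤ) := by omega
    rw [hb', zpow_add₀ (by norm_num : (2:ℝ) ≠ 0), zpow_natCast]
  have hpe : (0:ℝ) < (2:ℝ) ^ e := by positivity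
  rw [dyadicI, dyadicI, Set.Ico_subset_Ico_iff (by nlinarith : (i:ℝ)*2^a < ((i:ℝ)+1)*2^a)]
  have key1 : ((l:ℝ) * 2 ^ b ≤ (i:ℝ) * 2 ^ a) ↔ (l * (2:ℤ) ^ e ≤ i) := by
    constructor
    · intro h
      have h' : ((l * (2:ℤ)^e : ℤ):ℝ) ≤ (i:ℝ) := by push_cast; rw [h2] at h; nlinarith
      exact_mod_cast h'
    · intro h
      have h' : ((l * (2:ℤ)^e : ℤ):ℝ) ≤ (i:ℝ) := by exact_mod_cast h
      push_cast at h'; rw [h2]; nlinarith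
  have key2 : (((i:ℝ)+1) * 2 ^ a ≤ ((l:ℝ)+1) * 2 ^ b) ↔ (i + 1 ≤ (l+1) * (2:ℤ) ^ e) := by
    constructor
    · intro h
      have h' : ((i + 1 : ℤ):ℝ) ≤ (((l+1) * (2:ℤ)^e : ℤ):ℝ) := by push_cast; rw [h2] at h; nlinarith
      exact_mod_cast h'
    · intro h
      have h' : ((i + 1 : ℤ):ℝ) ≤ (((l+1) * (2:ℤ)^e : ℤ):ℝ) := by exact_mod_cast h
      push_cast at h'; rw [h2]; nlinarith
  rw [key1, key2]

lemma dyadic_subset_or_disjoint {a b : ℤ} (hab : a ≤ b) (i l : ℤ) :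
    dyadicI a i ⊆ dyadicI b l ∨ ∀ x ∈ dyadicI a i, x ∉ dyadicI b l := by
  by_cases h : dyadicI a i ⊆ dyadicI b l
  · exact Or.inl h
  right
  rw [dyadic_subset_iff hab] at h
  push_neg at h
  set e := (b - a).toNat with hedef
  have he : (e : ℤ) = b - a := Int.toNat_of_nonneg (sub_nonneg.2 hab)
  have h2 : (2:ℝ) ^ b = (2:ℝ) ^ a * (2:ℝ) ^ e := by
    have hb' : b = a + (e : ℤ) := by omega
    rw [hb', zpow_add₀ (by norm_num : (2:ℝ) ≠ 0), zpow_natCast]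
  have hpa := two_zpow_pos a
  have hpe : (0:ℝ) < (2:ℝ) ^ e := by positivity
  intro x hx hx'
  rw [dyadicI, Set.mem_Ico] at hx hx'
  by_cases h1 : l * (2:ℤ) ^ e ≤ i
  · -- then i + 1 > (l+1)*2^e, i.e. (l+1)*2^e ≤ i
    have h3 : (l+1) * (2:ℤ)^e ≤ i := by have := h h1; omega
    have h3' : ((l:ℝ)+1) * 2 ^ b ≤ (i:ℝ) * 2^a := by
      have : (((l+1) * (2:ℤ)^e : ℤ):ℝ) ≤ (i:ℝ) := by exact_mod_cast h3
      push_cast at this; rw [h2]; nlinarith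
    linarith [hx.1, hx'.2]
  · push_neg at h1
    have h3 : i + 1 ≤ l * (2:ℤ)^e := by omega
    have h3' : ((i:ℝ)+1) * 2^a ≤ (l:ℝ) * 2 ^ b := by
      have : ((i + 1 : ℤ):ℝ) ≤ ((l * (2:ℤ)^e : ℤ):ℝ) := by exact_mod_cast h3
      push_cast at this; rw [h2]; nlinarith
    linarith [hx.2, hx'.1]

lemma dyadic_disjoint_same {a i l : ℤ} (h : i ≠ l) : ∀ x ∈ dyadicI a i, x ∉ dyadicI a l := by
  rcases dyadic_subset_or_disjoint (le_refl a) i l with hs | hd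
  · rw [dyadic_subset_iff le_rfl] at hs
    simp only [sub_self, Int.toNat_zero, pow_zero, mul_one] at hs
    omega
  · exact hd

lemma half_lo_subset (k j : ℤ) : dyadicI (k-1) (2*j) ⊆ dyadicI k j := by
  rw [dyadic_subset_iff (by omega)]
  have : (k - (k-1)).toNat = 1 := by omega
  rw [this]; omega

lemma half_hi_subset (k j : ℤ) : dyadicI (k-1) (2*j+1) ⊆ dyadicI k j := by
  rw [dyadic_subset_iff (by omega)]
  have : (k - (k-1)).toNat = 1 := by omega
  rw [this]; omega

lemma halves_union (k j : ℤ) : dyadicI (k-1) (2*j) ∪ dyadicI (k-1) (2*j+1) = dyadicI k j := by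
  have h2 : (2:ℝ)^k = 2^(k-1) * 2 := by
    rw [← zpow_add_one₀ (by norm_num : (2:ℝ) ≠ 0) (k-1), sub_add_cancel]
  have hp := two_zpow_pos (k-1)
  ext x
  simp only [dyadicI, mem_union, mem_Ico]
  push_cast
  rw [h2]
  constructor
  · rintro (⟨ha, hb⟩ | ⟨ha, hb⟩) <;> constructor <;> nlinarith
  · rintro ⟨ha, hb⟩
    rcases lt_or_ge x ((2*(j:ℝ)+1) * 2^(k-1)) with h | h
    · left; constructor <;> nlinarith
    · right; constructor <;> nlinarith





lemma c2_pos (k : ℤ) : (0:ℝ) < ((2 : ℝ) ^ k) ^ (-(1 : ℝ) / 2) :=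
  Real.rpow_pos_of_pos (two_zpow_pos k) _

lemma haarFn_hi {k j : ℤ} {x : ℝ} (hx : x ∈ dyadicI (k-1) (2*j+1)) :
    haarFn k j x = ((2 : ℝ) ^ k) ^ (-(1 : ℝ) / 2) := by
  have hlo : x ∉ dyadicI (k-1) (2*j) := fun h => dyadic_disjoint_same (by omega) x h hx
  rw [haarFn, Set.indicator_of_mem hx, Set.indicator_of_notMem hlo]
  simp

lemma haarFn_lo {k j : ℤ} {x : ℝ} (hx : x ∈ dyadicI (k-1) (2*j)) :
    haarFn k j x = -(((2 : ℝ) ^ k) ^ (-(1 : ℝ) / 2)) := by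
  have hhi : x ∉ dyadicI (k-1) (2*j+1) := fun h => dyadic_disjoint_same (by omega) x h hx
  rw [haarFn, Set.indicator_of_mem hx, Set.indicator_of_notMem hhi]
  simp

lemma haarFn_zero {k j : ℤ} {x : ℝ} (hx : x ∉ dyadicI k j) : haarFn k j x = 0 := by
  have hlo : x ∉ dyadicI (k-1) (2*j) := fun h => hx (half_lo_subset k j h)
  have hhi : x ∉ dyadicI (k-1) (2*j+1) := fun h => hx (half_hi_subset k j h)
  rw [haarFn, Set.indicator_of_notMem hlo, Set.indicator_of_notMem hhi]
  simp

lemma haarOne_mem {k j : ℤ} {x : ℝ} (hx : x ∈ dyadicI k j) :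
    haarOne k j x = ((2 : ℝ) ^ k) ^ (-(1 : ℝ) / 2) := by
  rw [haarOne, Set.indicator_of_mem hx]; simp

lemma haarOne_zero {k j : ℤ} {x : ℝ} (hx : x ∉ dyadicI k j) : haarOne k j x = 0 := by
  rw [haarOne, Set.indicator_of_notMem hx]; simp

lemma haarOne_eq_indicator (k j : ℤ) :
    haarOne k j = Set.indicator (dyadicI k j) (fun _ => ((2 : ℝ) ^ k) ^ (-(1 : ℝ) / 2)) := by
  funext x
  by_cases hx : x ∈ dyadicI k j
  · rw [haarOne_mem hx, Set.indicator_of_mem hx]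
  · rw [haarOne_zero hx, Set.indicator_of_notMem hx]

/-- pointwise tsum of countably many measurable real functions is measurable -/
lemma measurable_tsum_real {ι : Type*} [Countable ι] {f : ι → ℝ → ℝ}
    (hf : ∀ i, Measurable (f i)) : Measurable (fun x => ∑' i, f i x) := by
  classical
  set S : Set ℝ := {x : ℝ | (∑' i, (‖f i x‖₊ : ℝ≥0∞)) < ⊤} with hSdef
  have hS : MeasurableSet S :=
    measurableSet_lt (Measurable.ennreal_tsum fun i => (hf i).nnnorm.coe_nnreal_ennreal)
      measurable_const
  set G : ℝ → ℝ := fun x =>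
    (∑' i, ENNReal.ofReal (f i x)).toReal - (∑' i, ENNReal.ofReal (-f i x)).toReal with hGdef
  have hG : Measurable G := by
    apply Measurable.sub
    · exact (Measurable.ennreal_tsum fun i => ENNReal.measurable_ofReal.comp (hf i)).ennreal_toReal
    · exact (Measurable.ennreal_tsum fun i =>
        ENNReal.measurable_ofReal.comp (hf i).neg).ennreal_toReal
  have hkey : (fun x => ∑' i, f i x) = S.indicator G := by
    funext x
    by_cases hx : x ∈ S
    · rw [Set.indicator_of_mem hx]
      have hsum : Summable fun i => f i x := by
        apply Summable.of_nnnorm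
        exact ENNReal.tsum_coe_ne_top_iff_summable.mp hx.ne
      have habs : Summable fun i => |f i x| := (summable_abs_iff).mpr hsum
      have hpos : Summable fun i => max (f i x) 0 :=
        Summable.of_nonneg_of_le (fun i => le_max_right _ _)
          (fun i => max_le (le_abs_self _) (abs_nonneg _)) habs
      have hneg : Summable fun i => max (-f i x) 0 :=
        Summable.of_nonneg_of_le (fun i => le_max_right _ _)
          (fun i => max_le (abs_neg (f i x) ▸ le_abs_self _) (abs_nonneg _)) habs
      have e1 : ∀ r : ℝ, ENNReal.ofReal r = ENNReal.ofReal (max r 0) := by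
        intro r
        rcases le_total r 0 with h | h
        · rw [max_eq_right h, ENNReal.ofReal_eq_zero.mpr h]; simp
        · rw [max_eq_left h]
      have e2 : (∑' i, ENNReal.ofReal (f i x)).toReal = ∑' i, max (f i x) 0 := by
        rw [show (fun i => ENNReal.ofReal (f i x)) = fun i => ENNReal.ofReal (max (f i x) 0) from
          funext fun i => e1 _]
        rw [← ENNReal.ofReal_tsum_of_nonneg (fun i => le_max_right _ _) hpos]
        exact ENNReal.toReal_ofReal (tsum_nonneg fun i => le_max_right _ _)
      have e3 : (∑' i, ENNReal.ofReal (-f i x)).toReal = ∑' i, max (-f i x) 0 := by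
        rw [show (fun i => ENNReal.ofReal (-f i x)) = fun i => ENNReal.ofReal (max (-f i x) 0) from
          funext fun i => e1 _]
        rw [← ENNReal.ofReal_tsum_of_nonneg (fun i => le_max_right _ _) hneg]
        exact ENNReal.toReal_ofReal (tsum_nonneg fun i => le_max_right _ _)
      rw [hGdef]
      simp only
      rw [e2, e3, ← Summable.tsum_sub hpos hneg]
      congr 1
      funext i
      rcases le_total (f i x) 0 with h | h
      · rw [max_eq_right h, max_eq_left (by linarith)]; ring
      · rw [max_eq_left h, max_eq_right (by linarith)]; ring
    · rw [Set.indicator_of_notMem hx]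
      apply tsum_eq_zero_of_not_summable
      intro hsum
      apply hx
      rw [hSdef, Set.mem_setOf_eq, lt_top_iff_ne_top]
      apply ENNReal.tsum_coe_ne_top_iff_summable.mpr
      apply NNReal.summable_coe.mp
      have : (fun i => (‖f i x‖₊ : ℝ)) = fun i => |f i x| := by
        funext i; rw [coe_nnnorm, Real.norm_eq_abs]
      rw [this]
      exact (summable_abs_iff).mpr hsum
  rw [hkey]
  exact hG.indicator hS

lemma measurable_riesz (α : ℝ) (g : ℝ → ℝ) : Measurable (riesz α g) := by
  apply measurable_tsum_real
  intro P
  exact (measurable_one.indicator (dyadic_meas P.1 P.2)).const_mul _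


def coefI (α : ℝ) (g : ℝ → ℝ) (P : ℤ × ℤ) : ℝ :=
  ((2:ℝ) ^ P.1) ^ (-α) * ∫ y in dyadicI P.1 P.2, g y

lemma ennnorm_tsum_le {ι : Type*} [Countable ι] (f : ι → ℝ) :
    (‖∑' i, f i‖₊ : ℝ≥0∞) ≤ ∑' i, (‖f i‖₊ : ℝ≥0∞) := by
  by_cases h2 : Summable fun i => ‖f i‖
  · calc (‖∑' i, f i‖₊ : ℝ≥0∞) = ENNReal.ofReal ‖∑' i, f i‖ := by
          rw [← enorm_eq_nnnorm, Real.enorm_eq_ofReal_abs, Real.norm_eq_abs]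
    _ ≤ ENNReal.ofReal (∑' i, ‖f i‖) := ENNReal.ofReal_le_ofReal (norm_tsum_le_tsum_norm h2)
    _ = ∑' i, ENNReal.ofReal ‖f i‖ := ENNReal.ofReal_tsum_of_nonneg (fun i => norm_nonneg _) h2
    _ = ∑' i, (‖f i‖₊ : ℝ≥0∞) := by
          congr 1; funext i; rw [← enorm_eq_nnnorm, Real.enorm_eq_ofReal_abs, Real.norm_eq_abs]
  · have : (∑' i, (‖f i‖₊ : ℝ≥0∞)) = ⊤ := by
      by_contra h
      apply h2
      have := ENNReal.tsum_coe_ne_top_iff_summable.mp h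
      have h3 := NNReal.summable_coe.mpr this
      simpa [coe_nnnorm] using h3
    rw [this]; exact le_top

lemma riesz_pairing (α : ℝ) (g w : ℝ → ℝ) (hw : AEStronglyMeasurable w volume)
    (hfin : (∑' P : ℤ × ℤ, ENNReal.ofReal |coefI α g P|
        * ∫⁻ x in dyadicI P.1 P.2, (‖w x‖₊ : ℝ≥0∞)) ≠ ⊤) :
    Integrable (fun x => riesz α g x * w x) volume ∧
    (∫ x, riesz α g x * w x) = (∑' P : ℤ × ℤ, coefI α g P * ∫ x in dyadicI P.1 P.2, w x) ∧
    Summable (fun P : ℤ × ℤ => coefI α g P * ∫ x in dyadicI P.1 P.2, w x) := by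
  classical
  set T : ℤ × ℤ → ℝ → ℝ :=
    fun P x => coefI α g P * (Set.indicator (dyadicI P.1 P.2) 1 x * w x) with hTdef
  have hpt : ∀ x, riesz α g x * w x = ∑' P, T P x := by
    intro x
    have h1 : ∀ P : ℤ × ℤ, T P x =
        (coefI α g P * Set.indicator (dyadicI P.1 P.2) 1 x) * w x := fun P => by
      rw [hTdef]; ring
    rw [tsum_congr h1, tsum_mul_right]
    rfl
  have hindw : ∀ P : ℤ × ℤ, ∀ x, Set.indicator (dyadicI P.1 P.2) 1 x * w x
      = Set.indicator (dyadicI P.1 P.2) w x := by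
    intro P x
    by_cases hx : x ∈ dyadicI P.1 P.2 <;>
      simp [Set.indicator_of_mem, Set.indicator_of_notMem, hx]
  have hTmeas : ∀ P, AEStronglyMeasurable (T P) volume := fun P =>
    (((measurable_one.indicator (dyadic_meas P.1 P.2)).aestronglyMeasurable.mul hw).const_mul _)
  have hTlint : ∀ P : ℤ × ℤ, (∫⁻ x, (‖T P x‖₊ : ℝ≥0∞)) =
      ENNReal.ofReal |coefI α g P| * ∫⁻ x in dyadicI P.1 P.2, (‖w x‖₊ : ℝ≥0∞) := by
    intro P
    have h1 : ∀ x, ((‖T P x‖₊ : ℝ≥0∞)) = ENNReal.ofReal |coefI α g P|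
        * Set.indicator (dyadicI P.1 P.2) (fun y => (‖w y‖₊ : ℝ≥0∞)) x := by
      intro x
      rw [hTdef]
      simp only
      rw [hindw P x]
      by_cases hx : x ∈ dyadicI P.1 P.2
      · rw [Set.indicator_of_mem hx, Set.indicator_of_mem hx, nnnorm_mul, ENNReal.coe_mul,
          ← enorm_eq_nnnorm, Real.enorm_eq_ofReal_abs]
      · rw [Set.indicator_of_notMem hx, Set.indicator_of_notMem hx]
        simp
    rw [lintegral_congr h1, lintegral_const_mul' _ _ ENNReal.ofReal_ne_top,
      lintegral_indicator (dyadic_meas P.1 P.2)]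
  have hfin' : (∑' P : ℤ × ℤ, ∫⁻ x, (‖T P x‖₊ : ℝ≥0∞)) ≠ ⊤ := by
    rw [tsum_congr hTlint]; exact hfin
  have hint : Integrable (fun x => riesz α g x * w x) volume := by
    have heq : (fun x => riesz α g x * w x) = fun x => ∑' P, T P x := funext hpt
    rw [heq]
    constructor
    · -- AEStronglyMeasurable
      set w' := hw.mk w with hw'def
      have hww' : w =ᵐ[volume] w' := hw.ae_eq_mk
      have hT'meas : Measurable fun x => ∑' P : ℤ × ℤ,
          coefI α g P * (Set.indicator (dyadicI P.1 P.2) 1 x * w' x) := by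
        apply measurable_tsum_real
        intro P
        exact ((measurable_one.indicator (dyadic_meas P.1 P.2)).mul hw.measurable_mk).const_mul _
      apply hT'meas.aestronglyMeasurable.congr
      filter_upwards [hww'] with x hx
      rw [hTdef]
      simp only [hx]
    · -- HasFiniteIntegral
      have hb : ∀ x, (‖∑' P, T P x‖₊ : ℝ≥0∞) ≤ ∑' P, (‖T P x‖₊ : ℝ≥0∞) := fun x =>
        ennnorm_tsum_le _
      apply lt_of_le_of_lt (lintegral_mono hb)
      rw [lintegral_tsum fun P => (hTmeas P).aemeasurable.nnnorm.coe_nnreal_ennreal]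
      exact lt_top_iff_ne_top.mpr hfin'
  refine ⟨hint, ?_, ?_⟩
  · have heq : (∫ x, riesz α g x * w x) = ∫ x, ∑' P, T P x :=
      integral_congr_ae (Filter.Eventually.of_forall hpt)
    rw [heq, integral_tsum hTmeas hfin']
    apply tsum_congr
    intro P
    rw [hTdef]
    simp only
    rw [integral_const_mul]
    congr 1
    rw [integral_congr_ae (Filter.Eventually.of_forall (hindw P)),
      integral_indicator (dyadic_meas P.1 P.2)]
  · apply Summable.of_nnnorm
    apply ENNReal.tsum_coe_ne_top_iff_summable.mp
    apply ne_top_of_le_ne_top hfin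
    apply ENNReal.tsum_le_tsum
    intro P
    calc ((‖coefI α g P * ∫ x in dyadicI P.1 P.2, w x‖₊ : ℝ≥0∞))
        = ENNReal.ofReal |coefI α g P| * ENNReal.ofReal |∫ x in dyadicI P.1 P.2, w x| := by
          rw [← enorm_eq_nnnorm, Real.enorm_eq_ofReal_abs, abs_mul, ENNReal.ofReal_mul (abs_nonneg _)]
      _ ≤ ENNReal.ofReal |coefI α g P| * ∫⁻ x in dyadicI P.1 P.2, (‖w x‖₊ : ℝ≥0∞) := by
          apply mul_le_mul_right
          rw [← Real.enorm_eq_ofReal_abs]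
          exact enorm_integral_le_lintegral_enorm _

lemma sum_scale_lintegral_le (a : ℤ) (g : ℝ → ℝ≥0∞) :
    (∑' l : ℤ, ∫⁻ x in dyadicI a l, g x) ≤ ∫⁻ x, g x := by
  have hd : Pairwise (Function.onFun Disjoint fun l : ℤ => dyadicI a l) := by
    intro i l h
    exact Set.disjoint_left.mpr fun x hx => dyadic_disjoint_same h x hx
  rw [← lintegral_iUnion (fun l => dyadic_meas a l) hd g]
  exact lintegral_mono' Measure.restrict_le_self le_rfl

lemma tsum_int_neg_reindex (k : ℤ) (f : ℤ → ℝ≥0∞) (h0 : ∀ n, k ≤ n → f n = 0) :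
    ∑' n : ℤ, f n = ∑' m : ℕ, f (k - 1 - m) := by
  symm
  apply Function.Injective.tsum_eq (g := fun m : ℕ => k - 1 - (m:ℤ))
  · intro a b h
    simp only at h
    omega
  · intro n hn
    simp only [Function.mem_support] at hn
    have : n < k := by by_contra h; exact hn (h0 n (by omega))
    exact ⟨(k-1-n).toNat, by simp; omega⟩

lemma tsum_int_pos_reindex (k : ℤ) (f : ℤ → ℝ≥0∞) (h0 : ∀ n, n < k → f n = 0) :
    ∑' n : ℤ, f n = ∑' m : ℕ, f (k + m) := by
  symm
  apply Function.Injective.tsum_eq (g := fun m : ℕ => k + (m:ℤ))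
  · intro a b h
    simp only at h
    omega
  · intro n hn
    simp only [Function.mem_support] at hn
    have : k ≤ n := by by_contra h; exact hn (h0 n (by omega))
    exact ⟨(n-k).toNat, by simp; omega⟩

lemma tsum_geo_ne_top (C ρ : ℝ) (hρ0 : 0 ≤ ρ) (hρ1 : ρ < 1) (W : ℝ≥0∞) (hW : W ≠ ⊤) :
    (∑' m : ℕ, ENNReal.ofReal (C * ρ^m) * W) ≠ ⊤ := by
  apply ne_top_of_le_ne_top (b := ENNReal.ofReal |C| * (1 - ENNReal.ofReal ρ)⁻¹ * W)
  · apply ENNReal.mul_ne_top (ENNReal.mul_ne_top ENNReal.ofReal_ne_top _) hW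
    rw [ENNReal.inv_ne_top]
    intro h
    rw [tsub_eq_zero_iff_le] at h
    exact absurd (lt_of_le_of_lt h (ENNReal.ofReal_lt_one.mpr hρ1)) (lt_irrefl _)
  · calc (∑' m : ℕ, ENNReal.ofReal (C * ρ^m) * W)
        ≤ ∑' m : ℕ, (ENNReal.ofReal |C| * (ENNReal.ofReal ρ)^m) * W := by
          apply ENNReal.tsum_le_tsum
          intro m
          apply mul_le_mul_left
          calc ENNReal.ofReal (C * ρ^m) ≤ ENNReal.ofReal (|C| * ρ^m) :=
                ENNReal.ofReal_le_ofReal (by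
                  apply mul_le_mul_of_nonneg_right (le_abs_self _) (pow_nonneg hρ0 _))
          _ = ENNReal.ofReal |C| * (ENNReal.ofReal ρ)^m := by
                rw [ENNReal.ofReal_mul (abs_nonneg _), ENNReal.ofReal_pow hρ0]
    _ = ENNReal.ofReal |C| * (1 - ENNReal.ofReal ρ)⁻¹ * W := by
          rw [ENNReal.tsum_mul_right, ENNReal.tsum_mul_left, ENNReal.tsum_geometric]

lemma geo_split (c : ℝ) (t : ℤ) (m : ℕ) :
    ((2:ℝ) ^ (t - (m:ℤ))) ^ c = ((2:ℝ) ^ t) ^ c * ((2:ℝ) ^ (-c)) ^ m := by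
  have h1 : ∀ z : ℤ, ((2:ℝ)^z) ^ c = (2:ℝ) ^ ((z:ℝ) * c) := fun z => by
    rw [← Real.rpow_intCast 2 z, ← Real.rpow_mul (by norm_num)]
  have h2 : ((2:ℝ) ^ (-c)) ^ m = (2:ℝ) ^ (-c * (m:ℝ)) := by
    rw [← Real.rpow_natCast ((2:ℝ)^(-c)) m, ← Real.rpow_mul (by norm_num)]
  rw [h1, h1, h2, ← Real.rpow_add (by norm_num : (0:ℝ) < 2)]
  congr 1
  push_cast
  ring

lemma geo_split_pos (c : ℝ) (t : ℤ) (m : ℕ) :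
    ((2:ℝ) ^ (t + (m:ℤ))) ^ c = ((2:ℝ) ^ t) ^ c * ((2:ℝ) ^ c) ^ m := by
  have h1 : ∀ z : ℤ, ((2:ℝ)^z) ^ c = (2:ℝ) ^ ((z:ℝ) * c) := fun z => by
    rw [← Real.rpow_intCast 2 z, ← Real.rpow_mul (by norm_num)]
  have h2 : ((2:ℝ) ^ c) ^ m = (2:ℝ) ^ (c * (m:ℝ)) := by
    rw [← Real.rpow_natCast ((2:ℝ)^c) m, ← Real.rpow_mul (by norm_num)]
  rw [h1, h1, h2, ← Real.rpow_add (by norm_num : (0:ℝ) < 2)]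
  congr 1
  push_cast
  ring

lemma fine_sum_ne_top (k : ℤ) (α c2' : ℝ) (hα1 : α < 1) (W : ℝ≥0∞) (hW : W ≠ ⊤) :
    (∑' a : ℤ, (if a < k then ENNReal.ofReal (c2' * ((2:ℝ)^a)^(1-α)) * W else 0)) ≠ ⊤ := by
  rw [tsum_int_neg_reindex k _ (fun n hn => if_neg (not_lt.2 hn))]
  have key : ∀ m : ℕ, (if (k-1-(m:ℤ)) < k then
        ENNReal.ofReal (c2' * ((2:ℝ)^(k-1-(m:ℤ)))^(1-α)) * W else 0)
      = ENNReal.ofReal ((c2' * ((2:ℝ)^(k-1))^(1-α)) * ((2:ℝ)^(-(1-α)))^m) * W := by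
    intro m
    rw [if_pos (by omega), geo_split (1-α) (k-1) m, mul_assoc]
  rw [tsum_congr key]
  exact tsum_geo_ne_top _ _ (Real.rpow_nonneg (by norm_num) _)
    (Real.rpow_lt_one_of_one_lt_of_neg (by norm_num) (by linarith)) W hW

lemma coarse_sum_ne_top (k : ℤ) (α C : ℝ) (hα0 : 0 < α) (W : ℝ≥0∞) (hW : W ≠ ⊤) :
    (∑' a : ℤ, (if k ≤ a then ENNReal.ofReal (C * ((2:ℝ)^a)^(-α)) * W else 0)) ≠ ⊤ := by
  rw [tsum_int_pos_reindex k _ (fun n hn => if_neg (not_le.2 hn))]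
  have key : ∀ m : ℕ, (if k ≤ (k+(m:ℤ)) then
        ENNReal.ofReal (C * ((2:ℝ)^(k+(m:ℤ)))^(-α)) * W else 0)
      = ENNReal.ofReal ((C * ((2:ℝ)^k)^(-α)) * ((2:ℝ)^(-α))^m) * W := by
    intro m
    rw [if_pos (by omega), geo_split_pos (-α) k m, mul_assoc]
  rw [tsum_congr key]
  exact tsum_geo_ne_top _ _ (Real.rpow_nonneg (by norm_num) _)
    (Real.rpow_lt_one_of_one_lt_of_neg (by norm_num) (by linarith)) W hW


section Eval
variable {k j : ℤ} {b : ℝ → ℝ}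

lemma integrableOn_b_set (hb : LocallyIntegrable b volume) {s : Set ℝ} {a l : ℤ}
    (hs : s ⊆ dyadicI a l) : IntegrableOn b s volume := by
  apply IntegrableOn.mono_set (t := Set.Icc ((l:ℝ) * 2^a) (((l:ℝ)+1) * 2^a))
  · exact hb.integrableOn_isCompact isCompact_Icc
  · exact subset_trans hs Set.Ico_subset_Icc_self

lemma integrable_indicator_one' (a l : ℤ) :
    Integrable (Set.indicator (dyadicI a l) (1 : ℝ → ℝ)) volume := by
  rw [integrable_indicator_iff (dyadic_meas a l)]
  apply (integrableOn_const_iff).2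
  right
  rw [dyadic_vol]
  exact ENNReal.ofReal_lt_top

lemma integral_indicator_one' (a l : ℤ) :
    ∫ x, Set.indicator (dyadicI a l) (1 : ℝ → ℝ) x = (2:ℝ)^a := by
  rw [integral_indicator (dyadic_meas a l)]
  simp only [Pi.one_apply]
  rw [setIntegral_const, measureReal_def, dyadic_vol, ENNReal.toReal_ofReal (two_zpow_pos a).le, smul_eq_mul,
    mul_one]

lemma integrable_haar (k j : ℤ) : Integrable (haarFn k j) volume := by
  unfold haarFn
  exact ((integrable_indicator_one' (k-1) (2*j+1)).sub (integrable_indicator_one' (k-1) (2*j))).const_mul _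

lemma integral_haar (k j : ℤ) : ∫ x, haarFn k j x = 0 := by
  unfold haarFn
  rw [integral_const_mul, integral_sub (integrable_indicator_one' (k-1) (2*j+1))
    (integrable_indicator_one' (k-1) (2*j)), integral_indicator_one', integral_indicator_one']
  simp

lemma bhaar_eq (k j : ℤ) (b : ℝ → ℝ) : (fun y => b y * haarFn k j y) =
    fun y => ((2:ℝ)^k) ^ (-(1:ℝ)/2) *
      (Set.indicator (dyadicI (k-1) (2*j+1)) b y - Set.indicator (dyadicI (k-1) (2*j)) b y) := by
  funext y
  by_cases hhi : y ∈ dyadicI (k-1) (2*j+1)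
  · have hlo : y ∉ dyadicI (k-1) (2*j) := fun h => dyadic_disjoint_same (by omega) y h hhi
    rw [haarFn_hi hhi, Set.indicator_of_mem hhi, Set.indicator_of_notMem hlo]
    ring
  · by_cases hlo : y ∈ dyadicI (k-1) (2*j)
    · rw [haarFn_lo hlo, Set.indicator_of_mem hlo, Set.indicator_of_notMem hhi]
      ring
    · have : y ∉ dyadicI k j := by
        intro h
        rw [← halves_union] at h
        rcases h with h | h
        exacts [hlo h, hhi h]
      rw [haarFn_zero this, Set.indicator_of_notMem hhi, Set.indicator_of_notMem hlo]
      ring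

lemma integrable_bhaar (hb : LocallyIntegrable b volume) (k j : ℤ) :
    Integrable (fun y => b y * haarFn k j y) volume := by
  rw [bhaar_eq]
  apply Integrable.const_mul
  apply Integrable.sub
  · exact ((integrableOn_b_set hb (subset_refl _)).integrable_indicator (dyadic_meas (k-1) (2*j+1)))
  · exact ((integrableOn_b_set hb (subset_refl _)).integrable_indicator (dyadic_meas (k-1) (2*j)))

lemma bhaarOne_eq (k j : ℤ) (b : ℝ → ℝ) : (fun y => b y * haarOne k j y) =
    fun y => ((2:ℝ)^k) ^ (-(1:ℝ)/2) * Set.indicator (dyadicI k j) b y := by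
  funext y
  by_cases hy : y ∈ dyadicI k j
  · rw [haarOne_mem hy, Set.indicator_of_mem hy]; ring
  · rw [haarOne_zero hy, Set.indicator_of_notMem hy]; ring

lemma integrable_bhaarOne (hb : LocallyIntegrable b volume) (k j : ℤ) :
    Integrable (fun y => b y * haarOne k j y) volume := by
  rw [bhaarOne_eq]
  apply Integrable.const_mul
  exact ((integrableOn_b_set hb (subset_refl _)).integrable_indicator (dyadic_meas k j))

lemma integrable_haarOne (k j : ℤ) : Integrable (haarOne k j) volume := by
  unfold haarOne
  exact (integrable_indicator_one' k j).const_mul _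

lemma integral_haarOne (k j : ℤ) : ∫ x, haarOne k j x = ((2:ℝ)^k) ^ (-(1:ℝ)/2) * (2:ℝ)^k := by
  unfold haarOne
  rw [integral_const_mul, integral_indicator_one']

-- set integral evaluations over K = dyadicI a l
lemma setInt_haar_hi {a l : ℤ} (h : dyadicI a l ⊆ dyadicI (k-1) (2*j+1)) :
    ∫ y in dyadicI a l, haarFn k j y = ((2:ℝ)^k) ^ (-(1:ℝ)/2) * (2:ℝ)^a := by
  rw [setIntegral_congr_fun (dyadic_meas a l)
    (fun x hx => haarFn_hi (h hx) : EqOn (haarFn k j) (fun _ => ((2:ℝ)^k) ^ (-(1:ℝ)/2)) _),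
    setIntegral_const, measureReal_def, dyadic_vol, ENNReal.toReal_ofReal (two_zpow_pos a).le, smul_eq_mul]
  ring

lemma setInt_haar_lo {a l : ℤ} (h : dyadicI a l ⊆ dyadicI (k-1) (2*j)) :
    ∫ y in dyadicI a l, haarFn k j y = -(((2:ℝ)^k) ^ (-(1:ℝ)/2) * (2:ℝ)^a) := by
  rw [setIntegral_congr_fun (dyadic_meas a l)
    (fun x hx => haarFn_lo (h hx) : EqOn (haarFn k j) (fun _ => -(((2:ℝ)^k) ^ (-(1:ℝ)/2))) _),
    setIntegral_const, measureReal_def, dyadic_vol, ENNReal.toReal_ofReal (two_zpow_pos a).le, smul_eq_mul]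
  ring

lemma setInt_haar_disj {a l : ℤ} (h : ∀ x ∈ dyadicI a l, x ∉ dyadicI k j) :
    ∫ y in dyadicI a l, haarFn k j y = 0 := by
  rw [setIntegral_congr_fun (dyadic_meas a l)
    (fun x hx => haarFn_zero (h x hx) : EqOn (haarFn k j) (fun _ => (0:ℝ)) _)]
  simp

lemma setInt_haar_sup {a l : ℤ} (h : dyadicI k j ⊆ dyadicI a l) :
    ∫ y in dyadicI a l, haarFn k j y = 0 := by
  rw [setIntegral_eq_integral_of_forall_compl_eq_zero
    (fun x hx => haarFn_zero (fun hI => hx (h hI)))]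
  exact integral_haar k j

lemma setInt_bhaar_hi {a l : ℤ} (h : dyadicI a l ⊆ dyadicI (k-1) (2*j+1)) :
    ∫ y in dyadicI a l, b y * haarFn k j y = (∫ y in dyadicI a l, b y) * (((2:ℝ)^k) ^ (-(1:ℝ)/2)) := by
  rw [setIntegral_congr_fun (dyadic_meas a l)
    (fun x hx => by simp only [haarFn_hi (h hx)] :
      EqOn (fun y => b y * haarFn k j y) (fun y => b y * (((2:ℝ)^k) ^ (-(1:ℝ)/2))) _),
    integral_mul_const]

lemma setInt_bhaar_lo {a l : ℤ} (h : dyadicI a l ⊆ dyadicI (k-1) (2*j)) :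
    ∫ y in dyadicI a l, b y * haarFn k j y = (∫ y in dyadicI a l, b y) * (-(((2:ℝ)^k) ^ (-(1:ℝ)/2))) := by
  rw [setIntegral_congr_fun (dyadic_meas a l)
    (fun x hx => by simp only [haarFn_lo (h hx)] :
      EqOn (fun y => b y * haarFn k j y) (fun y => b y * (-(((2:ℝ)^k) ^ (-(1:ℝ)/2)))) _),
    integral_mul_const]

lemma setInt_bhaar_disj {a l : ℤ} (h : ∀ x ∈ dyadicI a l, x ∉ dyadicI k j) :
    ∫ y in dyadicI a l, b y * haarFn k j y = 0 := by
  rw [setIntegral_congr_fun (dyadic_meas a l)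
    (fun x hx => by simp only [haarFn_zero (h x hx), mul_zero] :
      EqOn (fun y => b y * haarFn k j y) (fun _ => (0:ℝ)) _)]
  simp

lemma setInt_bhaar_sup {a l : ℤ} (h : dyadicI k j ⊆ dyadicI a l) :
    ∫ y in dyadicI a l, b y * haarFn k j y = ∫ y, b y * haarFn k j y := by
  apply setIntegral_eq_integral_of_forall_compl_eq_zero
  intro x hx
  rw [haarFn_zero (fun hI => hx (h hI)), mul_zero]

lemma setInt_haarOne_sub {a l : ℤ} (h : dyadicI a l ⊆ dyadicI k j) :
    ∫ y in dyadicI a l, haarOne k j y = ((2:ℝ)^k) ^ (-(1:ℝ)/2) * (2:ℝ)^a := by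
  rw [setIntegral_congr_fun (dyadic_meas a l)
    (fun x hx => haarOne_mem (h hx) : EqOn (haarOne k j) (fun _ => ((2:ℝ)^k) ^ (-(1:ℝ)/2)) _),
    setIntegral_const, measureReal_def, dyadic_vol, ENNReal.toReal_ofReal (two_zpow_pos a).le, smul_eq_mul]
  ring

lemma setInt_haarOne_disj {a l : ℤ} (h : ∀ x ∈ dyadicI a l, x ∉ dyadicI k j) :
    ∫ y in dyadicI a l, haarOne k j y = 0 := by
  rw [setIntegral_congr_fun (dyadic_meas a l)
    (fun x hx => haarOne_zero (h x hx) : EqOn (haarOne k j) (fun _ => (0:ℝ)) _)]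
  simp

lemma setInt_haarOne_sup {a l : ℤ} (h : dyadicI k j ⊆ dyadicI a l) :
    ∫ y in dyadicI a l, haarOne k j y = ((2:ℝ)^k) ^ (-(1:ℝ)/2) * (2:ℝ)^k := by
  rw [setIntegral_eq_integral_of_forall_compl_eq_zero
    (fun x hx => haarOne_zero (fun hI => hx (h hI)))]
  exact integral_haarOne k j

lemma setInt_bhaarOne_hi {a l : ℤ} (h : dyadicI a l ⊆ dyadicI (k-1) (2*j+1)) :
    ∫ y in dyadicI a l, b y * haarOne k j y = (∫ y in dyadicI a l, b y) * (((2:ℝ)^k) ^ (-(1:ℝ)/2)) := by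
  rw [setIntegral_congr_fun (dyadic_meas a l)
    (fun x hx => by simp only [haarOne_mem (half_hi_subset k j (h hx))] :
      EqOn (fun y => b y * haarOne k j y) (fun y => b y * (((2:ℝ)^k) ^ (-(1:ℝ)/2))) _),
    integral_mul_const]

lemma setInt_bhaarOne_lo {a l : ℤ} (h : dyadicI a l ⊆ dyadicI (k-1) (2*j)) :
    ∫ y in dyadicI a l, b y * haarOne k j y = (∫ y in dyadicI a l, b y) * (((2:ℝ)^k) ^ (-(1:ℝ)/2)) := by
  rw [setIntegral_congr_fun (dyadic_meas a l)
    (fun x hx => by simp only [haarOne_mem (half_lo_subset k j (h hx))] :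
      EqOn (fun y => b y * haarOne k j y) (fun y => b y * (((2:ℝ)^k) ^ (-(1:ℝ)/2))) _),
    integral_mul_const]

lemma setInt_bhaarOne_disj {a l : ℤ} (h : ∀ x ∈ dyadicI a l, x ∉ dyadicI k j) :
    ∫ y in dyadicI a l, b y * haarOne k j y = 0 := by
  rw [setIntegral_congr_fun (dyadic_meas a l)
    (fun x hx => by simp only [haarOne_zero (h x hx), mul_zero] :
      EqOn (fun y => b y * haarOne k j y) (fun _ => (0:ℝ)) _)]
  simp

lemma fine_cases (k j : ℤ) {a : ℤ} (ha : a < k) (l : ℤ) :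
    dyadicI a l ⊆ dyadicI (k-1) (2*j+1) ∨ dyadicI a l ⊆ dyadicI (k-1) (2*j) ∨
      (∀ x ∈ dyadicI a l, x ∉ dyadicI k j) := by
  rcases dyadic_subset_or_disjoint (show a ≤ k-1 by omega) l (2*j+1) with h1 | h1
  · exact Or.inl h1
  rcases dyadic_subset_or_disjoint (show a ≤ k-1 by omega) l (2*j) with h2 | h2
  · exact Or.inr (Or.inl h2)
  refine Or.inr (Or.inr fun x hx hxI => ?_)
  rw [← halves_union] at hxI
  rcases hxI with h | h
  exacts [h2 x hx h, h1 x hx h]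

lemma coarse_cases (k j : ℤ) {a : ℤ} (ha : k ≤ a) (l : ℤ) :
    dyadicI k j ⊆ dyadicI a l ∨ ∀ x ∈ dyadicI a l, x ∉ dyadicI k j := by
  rcases dyadic_subset_or_disjoint ha j l with h | h
  · exact Or.inl h
  · exact Or.inr fun x hxK hxI => (h x hxI) hxK

end Eval


lemma rpow_negalpha_mul (α : ℝ) (a : ℤ) :
    ((2:ℝ)^a)^(-α) * (2:ℝ)^a = ((2:ℝ)^a)^(1-α) := by
  conv_rhs => rw [show (1:ℝ)-α = -α+1 by ring, Real.rpow_add (two_zpow_pos a), Real.rpow_one]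


lemma anc_sub (k j : ℤ) (m : ℕ) : dyadicI k j ⊆ dyadicI (k + m) (j / 2^m) := by
  rw [dyadic_subset_iff (by omega)]
  have ht : ((k:ℤ) + m - k).toNat = m := by omega
  rw [ht]
  have hp : (0:ℤ) < 2^m := pow_pos (by norm_num) m
  have hd1 := Int.mul_ediv_add_emod j (2^m)
  have hd2 := Int.emod_nonneg j hp.ne'
  have hd3 := Int.emod_lt_of_pos j hp
  constructor
  · have hcomm : (j / 2^m) * 2^m = 2^m * (j / 2^m) := mul_comm _ _
    linarith
  · have hexp : (j / 2^m + 1) * 2^m = 2^m * (j / 2^m) + 2^m := by ring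
    linarith

lemma anc_uniq {k a j l : ℤ} (ha : k ≤ a) (h : dyadicI k j ⊆ dyadicI a l) :
    l = j / 2^(a-k).toNat := by
  rw [dyadic_subset_iff ha] at h
  set m := (a-k).toNat with hm
  have hp : (0:ℤ) < 2^m := pow_pos (by norm_num) m
  have hd1 := Int.mul_ediv_add_emod j (2^m)
  have hd2 := Int.emod_nonneg j hp.ne'
  have hd3 := Int.emod_lt_of_pos j hp
  set d := j / 2^m with hd
  have hb1 : d * 2^m ≤ j := by
    have hcomm : d * 2^m = 2^m * d := mul_comm _ _
    linarith
  have hb2 : j + 1 ≤ (d+1) * 2^m := by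
    have hexp : (d+1) * 2^m = 2^m * d + 2^m := by ring
    linarith
  have k1 : l < d + 1 := by
    have h' : l * 2^m < (d+1) * 2^m := lt_of_le_of_lt h.1 (by linarith)
    exact lt_of_mul_lt_mul_right h' hp.le
  have k2 : d < l + 1 := by
    have h' : d * 2^m < (l+1) * 2^m := lt_of_le_of_lt hb1 (by linarith)
    exact lt_of_mul_lt_mul_right h' hp.le
  omega

section Fin
variable {k j : ℤ} {b : ℝ → ℝ} {α : ℝ}

lemma hN1 (hα1 : α < 1) (k j : ℤ) (hb : LocallyIntegrable b volume) :
    (∑' P : ℤ × ℤ, ENNReal.ofReal |coefI α (haarFn k j) P|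
        * ∫⁻ x in dyadicI P.1 P.2, (‖b x * haarOne k j x‖₊ : ℝ≥0∞)) ≠ ⊤ := by
  set c2 := ((2:ℝ)^k) ^ (-(1:ℝ)/2) with hc2
  set w := fun x => b x * haarOne k j x with hwdef
  set W := ∫⁻ x, (‖w x‖₊ : ℝ≥0∞) with hWdef
  have hW : W ≠ ⊤ := (integrable_bhaarOne hb k j).2.ne
  set F : ℤ × ℤ → ℝ≥0∞ := fun P => ENNReal.ofReal |coefI α (haarFn k j) P|
        * ∫⁻ x in dyadicI P.1 P.2, (‖w x‖₊ : ℝ≥0∞) with hFdef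
  have hsplit : (∑' P : ℤ×ℤ, F P) = ∑' a : ℤ, ∑' l : ℤ, F (a, l) := by
    rw [← ENNReal.tsum_prod]
  have hrow : ∀ a : ℤ, (∑' l : ℤ, F (a, l)) ≤
      (if a < k then ENNReal.ofReal (c2 * ((2:ℝ)^a)^(1-α)) * W else 0) := by
    intro a
    by_cases ha : a < k
    · rw [if_pos ha]
      calc (∑' l : ℤ, F (a, l))
          ≤ ∑' l : ℤ, ENNReal.ofReal (c2 * ((2:ℝ)^a)^(1-α))
              * ∫⁻ x in dyadicI a l, (‖w x‖₊ : ℝ≥0∞) := by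
            apply ENNReal.tsum_le_tsum
            intro l
            apply mul_le_mul_left
            apply ENNReal.ofReal_le_ofReal
            have habs : |∫ y in dyadicI a l, haarFn k j y| ≤ c2 * (2:ℝ)^a := by
              rcases fine_cases k j ha l with h | h | h
              · rw [setInt_haar_hi h, abs_of_nonneg (by positivity)]
              · rw [setInt_haar_lo h, abs_neg, abs_of_nonneg (by positivity)]
              · rw [setInt_haar_disj h, abs_zero]; positivity
            calc |coefI α (haarFn k j) (a, l)|
                = ((2:ℝ)^a)^(-α) * |∫ y in dyadicI a l, haarFn k j y| := by
                  rw [coefI, abs_mul, abs_of_nonneg (Real.rpow_nonneg (two_zpow_pos a).le _)]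
              _ ≤ ((2:ℝ)^a)^(-α) * (c2 * (2:ℝ)^a) :=
                  mul_le_mul_of_nonneg_left habs (Real.rpow_nonneg (two_zpow_pos a).le _)
              _ = c2 * ((2:ℝ)^a)^(1-α) := by
                  rw [← rpow_negalpha_mul α a]; ring
        _ = ENNReal.ofReal (c2 * ((2:ℝ)^a)^(1-α))
              * ∑' l : ℤ, ∫⁻ x in dyadicI a l, (‖w x‖₊ : ℝ≥0∞) := ENNReal.tsum_mul_left
        _ ≤ ENNReal.ofReal (c2 * ((2:ℝ)^a)^(1-α)) * W :=
            mul_le_mul_right (sum_scale_lintegral_le a _) _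
    · rw [if_neg ha]
      have hz : ∀ l : ℤ, F (a, l) = 0 := by
        intro l
        have hc : coefI α (haarFn k j) (a, l) = 0 := by
          rw [coefI]
          rcases coarse_cases k j (not_lt.1 ha) l with h | h
          · rw [setInt_haar_sup h, mul_zero]
          · rw [setInt_haar_disj h, mul_zero]
        rw [hFdef]
        simp [hc]
      rw [tsum_congr hz]
      simp
  apply ne_top_of_le_ne_top (fine_sum_ne_top k α c2 hα1 W hW)
  rw [hsplit]
  exact ENNReal.tsum_le_tsum hrow

lemma lint_haarOne_le (a l : ℤ) :
    (∫⁻ x in dyadicI a l, (‖haarOne k j x‖₊ : ℝ≥0∞)) ≤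
      ENNReal.ofReal (((2:ℝ)^k) ^ (-(1:ℝ)/2)) * ENNReal.ofReal ((2:ℝ)^a) := by
  have hpt : ∀ x, (‖haarOne k j x‖₊ : ℝ≥0∞) ≤ ENNReal.ofReal (((2:ℝ)^k) ^ (-(1:ℝ)/2)) := by
    intro x
    by_cases hx : x ∈ dyadicI k j
    · rw [haarOne_mem hx, ← enorm_eq_nnnorm, Real.enorm_eq_ofReal_abs, abs_of_nonneg (c2_pos k).le]
    · rw [haarOne_zero hx]; simp
  calc (∫⁻ x in dyadicI a l, (‖haarOne k j x‖₊ : ℝ≥0∞))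
      ≤ ∫⁻ _ in dyadicI a l, ENNReal.ofReal (((2:ℝ)^k) ^ (-(1:ℝ)/2)) :=
        lintegral_mono fun x => hpt x
    _ = ENNReal.ofReal (((2:ℝ)^k) ^ (-(1:ℝ)/2)) * volume (dyadicI a l) := by
        rw [setLIntegral_const]
    _ = _ := by rw [dyadic_vol]

lemma coef_bhaar_le (hb : LocallyIntegrable b volume) (a l : ℤ) :
    ENNReal.ofReal |coefI α (fun y => b y * haarFn k j y) (a, l)| ≤
      ENNReal.ofReal (((2:ℝ)^a)^(-α)) * ∫⁻ x in dyadicI a l, (‖b x * haarFn k j x‖₊ : ℝ≥0∞) := by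
  rw [coefI, abs_mul, abs_of_nonneg (Real.rpow_nonneg (two_zpow_pos a).le _),
    ENNReal.ofReal_mul (Real.rpow_nonneg (two_zpow_pos a).le _)]
  apply mul_le_mul_right
  rw [← Real.enorm_eq_ofReal_abs]
  exact enorm_integral_le_lintegral_enorm _

lemma hN2 (hα0 : 0 < α) (hα1 : α < 1) (k j : ℤ) (hb : LocallyIntegrable b volume) :
    (∑' P : ℤ × ℤ, ENNReal.ofReal |coefI α (fun y => b y * haarFn k j y) P|
        * ∫⁻ x in dyadicI P.1 P.2, (‖haarOne k j x‖₊ : ℝ≥0∞)) ≠ ⊤ := by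
  set c2 := ((2:ℝ)^k) ^ (-(1:ℝ)/2) with hc2
  set Wbh := ∫⁻ x, (‖b x * haarFn k j x‖₊ : ℝ≥0∞) with hWdef
  have hWbh : Wbh ≠ ⊤ := (integrable_bhaar hb k j).2.ne
  set F : ℤ × ℤ → ℝ≥0∞ := fun P => ENNReal.ofReal |coefI α (fun y => b y * haarFn k j y) P|
        * ∫⁻ x in dyadicI P.1 P.2, (‖haarOne k j x‖₊ : ℝ≥0∞) with hFdef
  have hsplit : (∑' P : ℤ×ℤ, F P) = ∑' a : ℤ, ∑' l : ℤ, F (a, l) := by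
    rw [← ENNReal.tsum_prod]
  set B1 : ℤ → ℝ≥0∞ := fun a => if a < k then ENNReal.ofReal (c2 * ((2:ℝ)^a)^(1-α)) * Wbh else 0
    with hB1def
  set B2 : ℤ → ℝ≥0∞ := fun a => if k ≤ a then
      ENNReal.ofReal ((c2 * (2:ℝ)^k) * ((2:ℝ)^a)^(-α)) * Wbh else 0 with hB2def
  have hrow : ∀ a : ℤ, (∑' l : ℤ, F (a, l)) ≤ B1 a + B2 a := by
    intro a
    by_cases ha : a < k
    · rw [hB1def, hB2def]
      simp only [if_pos ha, if_neg (not_le.2 ha), add_zero]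
      calc (∑' l : ℤ, F (a, l))
          ≤ ∑' l : ℤ, ENNReal.ofReal (c2 * ((2:ℝ)^a)^(1-α))
              * ∫⁻ x in dyadicI a l, (‖b x * haarFn k j x‖₊ : ℝ≥0∞) := by
            apply ENNReal.tsum_le_tsum
            intro l
            calc F (a, l) ≤ (ENNReal.ofReal (((2:ℝ)^a)^(-α))
                  * ∫⁻ x in dyadicI a l, (‖b x * haarFn k j x‖₊ : ℝ≥0∞))
                  * (ENNReal.ofReal c2 * ENNReal.ofReal ((2:ℝ)^a)) :=
                mul_le_mul (coef_bhaar_le hb a l) (lint_haarOne_le a l) zero_le zero_le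
              _ = (ENNReal.ofReal (((2:ℝ)^a)^(-α)) * (ENNReal.ofReal c2
                    * ENNReal.ofReal ((2:ℝ)^a)))
                  * ∫⁻ x in dyadicI a l, (‖b x * haarFn k j x‖₊ : ℝ≥0∞) := by ring
              _ = ENNReal.ofReal (c2 * ((2:ℝ)^a)^(1-α))
                  * ∫⁻ x in dyadicI a l, (‖b x * haarFn k j x‖₊ : ℝ≥0∞) := by
                  congr 1
                  rw [← ENNReal.ofReal_mul (by positivity : (0:ℝ) ≤ c2),
                    ← ENNReal.ofReal_mul (Real.rpow_nonneg (two_zpow_pos a).le _)]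
                  congr 1
                  rw [← rpow_negalpha_mul α a]
                  ring
        _ = ENNReal.ofReal (c2 * ((2:ℝ)^a)^(1-α))
              * ∑' l : ℤ, ∫⁻ x in dyadicI a l, (‖b x * haarFn k j x‖₊ : ℝ≥0∞) :=
            ENNReal.tsum_mul_left
        _ ≤ ENNReal.ofReal (c2 * ((2:ℝ)^a)^(1-α)) * Wbh :=
            mul_le_mul_right (sum_scale_lintegral_le a _) _
    · rw [hB1def, hB2def]
      simp only [if_neg ha, if_pos (not_lt.1 ha), zero_add]
      -- at most the ancestor term is nonzero
      have hsingle : (∑' l : ℤ, F (a, l)) = F (a, j / 2^(a-k).toNat) := by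
        apply tsum_eq_single
        intro l hl
        have hdisj : ∀ x ∈ dyadicI a l, x ∉ dyadicI k j := by
          rcases coarse_cases k j (not_lt.1 ha) l with h | h
          · exact absurd (anc_uniq (not_lt.1 ha) h) hl
          · exact h
        have : (∫⁻ x in dyadicI a l, (‖haarOne k j x‖₊ : ℝ≥0∞)) = 0 := by
          have he : (∫⁻ x in dyadicI a l, (‖haarOne k j x‖₊ : ℝ≥0∞))
              = ∫⁻ _ in dyadicI a l, (0:ℝ≥0∞) :=
            setLIntegral_congr_fun (dyadic_meas a l)
              (fun x hx => by simp [haarOne_zero (hdisj x hx)])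
          rw [he, lintegral_zero]
        rw [hFdef]
        simp only
        rw [this, mul_zero]
      rw [hsingle]
      calc F (a, j / 2^(a-k).toNat)
          ≤ (ENNReal.ofReal (((2:ℝ)^a)^(-α)) * Wbh)
            * (ENNReal.ofReal c2 * ENNReal.ofReal ((2:ℝ)^k)) := by
            apply mul_le_mul _ _ zero_le zero_le
            · apply le_trans (coef_bhaar_le hb a _)
              apply mul_le_mul_right
              exact lintegral_mono' Measure.restrict_le_self le_rfl
            · -- lint over K of haarOne ≤ ofReal c2 * ofReal 2^k : since haarOne supported in I
              have hpt : ∀ x, (‖haarOne k j x‖₊ : ℝ≥0∞) ≤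
                  Set.indicator (dyadicI k j) (fun _ => ENNReal.ofReal c2) x := by
                intro x
                by_cases hx : x ∈ dyadicI k j
                · rw [haarOne_mem hx, Set.indicator_of_mem hx,
                    ← enorm_eq_nnnorm, Real.enorm_eq_ofReal_abs, abs_of_nonneg (c2_pos k).le]
                · rw [haarOne_zero hx, Set.indicator_of_notMem hx]; simp
              calc (∫⁻ x in dyadicI a (j / 2^(a-k).toNat), (‖haarOne k j x‖₊ : ℝ≥0∞))
                  ≤ ∫⁻ x, (‖haarOne k j x‖₊ : ℝ≥0∞) :=
                    lintegral_mono' Measure.restrict_le_self le_rfl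
                _ ≤ ∫⁻ x, Set.indicator (dyadicI k j) (fun _ => ENNReal.ofReal c2) x :=
                    lintegral_mono fun x => hpt x
                _ = ENNReal.ofReal c2 * ENNReal.ofReal ((2:ℝ)^k) := by
                    rw [lintegral_indicator (dyadic_meas k j), setLIntegral_const, dyadic_vol]
        _ = ENNReal.ofReal ((c2 * (2:ℝ)^k) * ((2:ℝ)^a)^(-α)) * Wbh := by
            rw [ENNReal.ofReal_mul (by positivity), ENNReal.ofReal_mul (by positivity)]
            ring
  have hB1 : (∑' a : ℤ, B1 a) ≠ ⊤ := fine_sum_ne_top k α c2 hα1 Wbh hWbh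
  have hB2 : (∑' a : ℤ, B2 a) ≠ ⊤ := coarse_sum_ne_top k α (c2 * (2:ℝ)^k) hα0 Wbh hWbh
  apply ne_top_of_le_ne_top (b := (∑' a : ℤ, B1 a) + ∑' a : ℤ, B2 a)
  · exact ENNReal.add_ne_top.mpr ⟨hB1, hB2⟩
  · rw [hsplit, ← ENNReal.tsum_add]
    exact ENNReal.tsum_le_tsum hrow

end Fin


lemma zpow_rpow (z : ℤ) (c : ℝ) : ((2:ℝ)^z) ^ c = (2:ℝ) ^ ((z:ℝ) * c) := by
  rw [← Real.rpow_intCast 2 z, ← Real.rpow_mul (by norm_num)]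

lemma zpow_eq_rpow (z : ℤ) : ((2:ℝ)^z) = (2:ℝ) ^ ((z:ℝ)) := (Real.rpow_intCast 2 z).symm

lemma riesz_const_mul (α c : ℝ) (g : ℝ → ℝ) (x : ℝ) :
    riesz α (fun y => c * g y) x = c * riesz α g x := by
  simp only [riesz]
  rw [← tsum_mul_left]
  apply tsum_congr
  intro P
  rw [integral_const_mul]
  ring

section Phi
variable {k j : ℤ} {b : ℝ → ℝ} {α : ℝ}

lemma Phi_fine {a l : ℤ} (ha : a < k) :
    coefI α (haarFn k j) (a,l) * (∫ x in dyadicI a l, b x * haarOne k j x)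
      - coefI α (fun y => b y * haarFn k j y) (a,l) * (∫ x in dyadicI a l, haarOne k j x) = 0 := by
  rcases fine_cases k j ha l with h | h | h
  · rw [coefI, coefI]
    simp only
    rw [setInt_haar_hi h, setInt_bhaar_hi h, setInt_bhaarOne_hi h,
      setInt_haarOne_sub (h.trans (half_hi_subset k j))]
    ring
  · rw [coefI, coefI]
    simp only
    rw [setInt_haar_lo h, setInt_bhaar_lo h, setInt_bhaarOne_lo h,
      setInt_haarOne_sub (h.trans (half_lo_subset k j))]
    ring
  · rw [coefI, coefI]
    simp only
    rw [setInt_haar_disj h, setInt_bhaar_disj h, setInt_bhaarOne_disj h, setInt_haarOne_disj h]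
    ring

lemma Phi_coarse_disj {a l : ℤ} (h : ∀ x ∈ dyadicI a l, x ∉ dyadicI k j) :
    coefI α (haarFn k j) (a,l) * (∫ x in dyadicI a l, b x * haarOne k j x)
      - coefI α (fun y => b y * haarFn k j y) (a,l) * (∫ x in dyadicI a l, haarOne k j x) = 0 := by
  rw [coefI, coefI]
  simp only
  rw [setInt_haar_disj h, setInt_bhaar_disj h, setInt_bhaarOne_disj h, setInt_haarOne_disj h]
  ring

lemma Phi_anc {a l : ℤ} (h : dyadicI k j ⊆ dyadicI a l) :
    coefI α (haarFn k j) (a,l) * (∫ x in dyadicI a l, b x * haarOne k j x)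
      - coefI α (fun y => b y * haarFn k j y) (a,l) * (∫ x in dyadicI a l, haarOne k j x)
    = -(((2:ℝ)^a)^(-α) * (((2:ℝ)^k)^(-(1:ℝ)/2) * (2:ℝ)^k) * (∫ y, b y * haarFn k j y)) := by
  rw [coefI, coefI]
  simp only
  rw [setInt_haar_sup h, setInt_bhaar_sup h, setInt_haarOne_sup h]
  ring

lemma Phi_tsum (hα0 : 0 < α) (k j : ℤ) (b : ℝ → ℝ) :
    (∑' P : ℤ×ℤ, (coefI α (haarFn k j) P * (∫ x in dyadicI P.1 P.2, b x * haarOne k j x)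
      - coefI α (fun y => b y * haarFn k j y) P * (∫ x in dyadicI P.1 P.2, haarOne k j x)))
    = -(((2:ℝ)^k)^(-(1:ℝ)/2) * (2:ℝ)^k * ((2:ℝ)^k)^(-α) * (1 - (2:ℝ)^(-α))⁻¹
        * (∫ y, b y * haarFn k j y)) := by
  set Φ : ℤ × ℤ → ℝ := fun P =>
    coefI α (haarFn k j) P * (∫ x in dyadicI P.1 P.2, b x * haarOne k j x)
      - coefI α (fun y => b y * haarFn k j y) P * (∫ x in dyadicI P.1 P.2, haarOne k j x)
    with hΦdef
  have hinj : Function.Injective (fun m : ℕ => ((k + m : ℤ), j / 2^m)) := by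
    intro m n h
    have h1 : (k + m : ℤ) = k + n := congrArg Prod.fst h
    omega
  have hsupp : Function.support Φ ⊆ Set.range (fun m : ℕ => ((k + m : ℤ), j / 2^m)) := by
    intro P hP
    simp only [Function.mem_support] at hP
    by_cases ha : P.1 < k
    · exact absurd (Phi_fine ha) hP
    · push_neg at ha
      rcases coarse_cases k j ha P.2 with h | h
      · refine ⟨(P.1 - k).toNat, ?_⟩
        have h1 : (k + ((P.1 - k).toNat : ℤ)) = P.1 := by omega
        have h2 := anc_uniq ha h
        have h3 : ((P.1 - k).toNat : ℤ) = P.1 - k := by omega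
        apply Prod.ext
        · exact h1
        · exact h2.symm
      · exact absurd (Phi_coarse_disj h) hP
  rw [← Function.Injective.tsum_eq hinj hsupp]
  have heval : ∀ m : ℕ, Φ ((k+m : ℤ), j / 2^m)
      = (-(((2:ℝ)^k)^(-(1:ℝ)/2) * (2:ℝ)^k * ((2:ℝ)^k)^(-α) * (∫ y, b y * haarFn k j y)))
        * ((2:ℝ)^(-α))^m := by
    intro m
    rw [hΦdef]
    simp only
    rw [Phi_anc (anc_sub k j m), geo_split_pos (-α) k m]
    ring
  rw [tsum_congr heval, tsum_mul_left,
    tsum_geometric_of_lt_one (Real.rpow_nonneg (by norm_num) _)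
      (Real.rpow_lt_one_of_one_lt_of_neg (by norm_num) (by linarith))]
  ring

end Phi


theorem stmt12_aux (α p q : ℝ) (hα0 : 0 < α) (hα1 : α < 1)
    (hind : 1 - α + 1 / q = 1 / p) (hp : 1 < p) (hpq : p < q) :
    ∃ c : ℝ≥0∞, 0 < c ∧ ∀ b : ℝ → ℝ, LocallyIntegrable b volume →
      c * (⨆ I : ℤ × ℤ, ENNReal.ofReal
        (|∫ y, b y * haarFn I.1 I.2 y| * ((2 : ℝ) ^ I.1) ^ (-(1 : ℝ) / 2)))
      ≤ ⨆ f : {f : ℝ → ℝ // eLpNorm f (ENNReal.ofReal p) volume ≤ 1},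
          eLpNorm (fun x => b x * riesz α f.1 x - riesz α (fun y => b y * f.1 y) x)
            (ENNReal.ofReal q) volume := by
  have hq1 : 1 < q := hp.trans hpq
  have hq0 : 0 < q := by linarith
  have hρlt : (2:ℝ)^(-α) < 1 :=
    Real.rpow_lt_one_of_one_lt_of_neg (by norm_num) (by linarith)
  have hρ0 : (0:ℝ) ≤ (2:ℝ)^(-α) := Real.rpow_nonneg (by norm_num) _
  have hCpos : (0:ℝ) < (1 - (2:ℝ)^(-α))⁻¹ := by
    apply inv_pos.2; linarith
  refine ⟨ENNReal.ofReal ((1 - (2:ℝ)^(-α))⁻¹), ENNReal.ofReal_pos.2 hCpos, ?_⟩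
  intro b hb
  rw [ENNReal.mul_iSup]
  apply iSup_le
  rintro ⟨k, j⟩
  show ENNReal.ofReal ((1 - (2:ℝ)^(-α))⁻¹) * ENNReal.ofReal
      (|∫ y, b y * haarFn k j y| * ((2 : ℝ) ^ k) ^ (-(1 : ℝ) / 2)) ≤ _
  -- conjugate exponent
  set q' := Real.conjExponent q with hq'def
  have hconj : q.HolderConjugate q' := Real.HolderConjugate.conjExponent hq1
  have hq'pos : 0 < q' := hconj.symm.pos
  have hqne : q ≠ 0 := by linarith
  have hq1ne : q - 1 ≠ 0 := by linarith
  have hq'inv : (1:ℝ)/q' = 1 - 1/q := by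
    rw [hq'def, Real.conjExponent]
    field_simp
  have hTpos : (0:ℝ) < (2:ℝ)^k := two_zpow_pos k
  set c2 : ℝ := ((2:ℝ)^k) ^ (-(1:ℝ)/2) with hc2def
  have hc2pos : 0 < c2 := c2_pos k
  set lam : ℝ := ((2:ℝ)^k) ^ ((1:ℝ)/2 - 1/p) with hlamdef
  have hlampos : 0 < lam := Real.rpow_pos_of_pos hTpos _
  set H : ℝ := ∫ y, b y * haarFn k j y with hHdef
  set f : ℝ → ℝ := fun y => lam * haarFn k j y with hfdef
  set Fc : ℝ → ℝ := fun x => b x * riesz α f x - riesz α (fun y => b y * f y) x with hFcdef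
  have hone_meas : Measurable (haarOne k j) := by
    unfold haarOne
    exact (measurable_one.indicator (dyadic_meas k j)).const_mul _
  have hw1asm : AEStronglyMeasurable (fun x => b x * haarOne k j x) volume :=
    hb.aestronglyMeasurable.mul hone_meas.aestronglyMeasurable
  obtain ⟨hint1, heq1, hsum1⟩ := riesz_pairing α (haarFn k j)
    (fun x => b x * haarOne k j x) hw1asm (hN1 hα1 k j hb)
  obtain ⟨hint2, heq2, hsum2⟩ := riesz_pairing α (fun y => b y * haarFn k j y)
    (haarOne k j) hone_meas.aestronglyMeasurable (hN2 hα0 hα1 k j hb)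
  have hptF : ∀ x, Fc x * haarOne k j x =
      lam * (riesz α (haarFn k j) x * (b x * haarOne k j x))
      - lam * (riesz α (fun y => b y * haarFn k j y) x * haarOne k j x) := by
    intro x
    have h1 : riesz α f x = lam * riesz α (haarFn k j) x := by
      rw [hfdef]; exact riesz_const_mul α lam (haarFn k j) x
    have h2 : riesz α (fun y => b y * f y) x
        = lam * riesz α (fun y => b y * haarFn k j y) x := by
      have he : (fun y => b y * f y) = fun y => lam * (b y * haarFn k j y) := by
        funext y; rw [hfdef]; ring
      rw [he]; exact riesz_const_mul α lam _ x
    rw [hFcdef]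
    simp only
    rw [h1, h2]
    ring
  have hA : (∫ x, Fc x * haarOne k j x)
      = -(lam * (c2 * (2:ℝ)^k * ((2:ℝ)^k)^(-α) * (1 - (2:ℝ)^(-α))⁻¹ * H)) := by
    rw [integral_congr_ae (Filter.Eventually.of_forall hptF),
      integral_sub (hint1.const_mul lam) (hint2.const_mul lam),
      integral_const_mul, integral_const_mul, heq1, heq2, ← mul_sub,
      ← Summable.tsum_sub hsum1 hsum2, Phi_tsum hα0 k j b, ← hc2def, ← hHdef]
    ring
  have habsA : |∫ x, Fc x * haarOne k j x|
      = lam * c2 * (2:ℝ)^k * ((2:ℝ)^k)^(-α) * (1 - (2:ℝ)^(-α))⁻¹ * |H| := by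
    rw [hA, abs_neg]
    simp only [abs_mul]
    rw [abs_of_pos hlampos, abs_of_pos hc2pos, abs_of_pos hTpos,
      abs_of_pos (Real.rpow_pos_of_pos hTpos _), abs_of_pos hCpos]
    ring
  have hofp_ne0 : (ENNReal.ofReal p) ≠ 0 := (ENNReal.ofReal_pos.2 (by linarith)).ne'
  have hfle : eLpNorm f (ENNReal.ofReal p) volume ≤ 1 := by
    have heqn : (fun x => ‖f x‖)
        = fun x => ‖Set.indicator (dyadicI k j) (fun _ => lam * c2) x‖ := by
      funext x
      by_cases hhi : x ∈ dyadicI (k-1) (2*j+1)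
      · rw [hfdef]; simp only
        rw [haarFn_hi hhi, Set.indicator_of_mem (half_hi_subset k j hhi), ← hc2def]
      · by_cases hlo : x ∈ dyadicI (k-1) (2*j)
        · rw [hfdef]; simp only
          rw [haarFn_lo hlo, Set.indicator_of_mem (half_lo_subset k j hlo), ← hc2def,
            Real.norm_eq_abs, Real.norm_eq_abs, abs_mul, abs_mul, abs_neg]
        · have hnot : x ∉ dyadicI k j := by
            intro hxI
            rw [← halves_union] at hxI
            rcases hxI with h | h
            exacts [hlo h, hhi h]
          rw [hfdef]; simp only
          rw [haarFn_zero hnot, Set.indicator_of_notMem hnot, mul_zero]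
    apply le_of_eq
    calc eLpNorm f (ENNReal.ofReal p) volume
        = eLpNorm (fun x => ‖f x‖) (ENNReal.ofReal p) volume := (eLpNorm_norm f).symm
      _ = eLpNorm (fun x => ‖Set.indicator (dyadicI k j) (fun _ => lam * c2) x‖)
            (ENNReal.ofReal p) volume := by rw [heqn]
      _ = eLpNorm (Set.indicator (dyadicI k j) (fun _ => lam * c2))
            (ENNReal.ofReal p) volume := eLpNorm_norm _
      _ = (‖lam * c2‖₊ : ℝ≥0∞) * (volume (dyadicI k j)) ^ (1/(ENNReal.ofReal p).toReal) :=
          eLpNorm_indicator_const (dyadic_meas k j) hofp_ne0 ENNReal.ofReal_ne_top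
      _ = 1 := by
          rw [dyadic_vol, ENNReal.toReal_ofReal (by linarith : (0:ℝ) ≤ p),
            ENNReal.ofReal_rpow_of_pos hTpos, ← enorm_eq_nnnorm, Real.enorm_eq_ofReal_abs,
            abs_of_pos (by positivity : (0:ℝ) < lam * c2),
            ← ENNReal.ofReal_mul (by positivity)]
          rw [show lam * c2 * ((2:ℝ)^k) ^ ((1:ℝ)/p) = 1 from by
            rw [hlamdef, hc2def, ← Real.rpow_add hTpos, ← Real.rpow_add hTpos,
              show ((1:ℝ)/2 - 1/p + (-(1:ℝ)/2) + 1/p : ℝ) = 0 by ring, Real.rpow_zero]]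
          exact ENNReal.ofReal_one
  have hFasm : AEStronglyMeasurable Fc volume := by
    rw [hFcdef]
    exact (hb.aestronglyMeasurable.mul (measurable_riesz α f).aestronglyMeasurable).sub
      (measurable_riesz α _).aestronglyMeasurable
  have hq'ne0 : (ENNReal.ofReal q') ≠ 0 := (ENNReal.ofReal_pos.2 hq'pos).ne'
  have hqne0 : (ENNReal.ofReal q) ≠ 0 := (ENNReal.ofReal_pos.2 hq0).ne'
  have hHolder : ENNReal.ofReal |∫ x, Fc x * haarOne k j x|
      ≤ eLpNorm Fc (ENNReal.ofReal q) volume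
        * eLpNorm (haarOne k j) (ENNReal.ofReal q') volume := by
    calc ENNReal.ofReal |∫ x, Fc x * haarOne k j x|
        = (‖∫ x, Fc x * haarOne k j x‖₊ : ℝ≥0∞) := (Real.enorm_eq_ofReal_abs _).symm
      _ ≤ ∫⁻ x, (‖Fc x * haarOne k j x‖₊ : ℝ≥0∞) := enorm_integral_le_lintegral_enorm _
      _ = ∫⁻ x, ((fun x => (‖Fc x‖₊ : ℝ≥0∞)) * (fun x => (‖haarOne k j x‖₊ : ℝ≥0∞))) x := by
          apply lintegral_congr
          intro x
          simp [nnnorm_mul]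
      _ ≤ (∫⁻ x, (‖Fc x‖₊ : ℝ≥0∞) ^ q) ^ (1/q)
            * (∫⁻ x, (‖haarOne k j x‖₊ : ℝ≥0∞) ^ q') ^ (1/q') :=
          ENNReal.lintegral_mul_le_Lp_mul_Lq volume hconj hFasm.enorm
            hone_meas.aestronglyMeasurable.enorm
      _ = eLpNorm Fc (ENNReal.ofReal q) volume
            * eLpNorm (haarOne k j) (ENNReal.ofReal q') volume := by
          rw [eLpNorm_eq_lintegral_rpow_enorm_toReal hqne0 ENNReal.ofReal_ne_top,
            eLpNorm_eq_lintegral_rpow_enorm_toReal hq'ne0 ENNReal.ofReal_ne_top,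
            ENNReal.toReal_ofReal hq0.le, ENNReal.toReal_ofReal hq'pos.le]; rfl
  have hNq' : eLpNorm (haarOne k j) (ENNReal.ofReal q') volume
      = ENNReal.ofReal (c2 * ((2:ℝ)^k) ^ ((1:ℝ)/q')) := by
    rw [haarOne_eq_indicator, eLpNorm_indicator_const (dyadic_meas k j) hq'ne0
      ENNReal.ofReal_ne_top, dyadic_vol, ENNReal.toReal_ofReal hq'pos.le,
      ENNReal.ofReal_rpow_of_pos hTpos, Real.enorm_eq_ofReal_abs, ← hc2def,
      abs_of_pos hc2pos, ← ENNReal.ofReal_mul hc2pos.le]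
  rw [hNq'] at hHolder
  have hkey : c2 * ((2:ℝ)^k) ^ ((1:ℝ)/q')
      = lam * ((2:ℝ)^k) * ((2:ℝ)^k)^(-α) := by
    rw [hc2def, hlamdef]
    calc ((2:ℝ)^k) ^ (-(1:ℝ)/2) * ((2:ℝ)^k) ^ ((1:ℝ)/q')
        = ((2:ℝ)^k) ^ (-(1:ℝ)/2 + (1:ℝ)/q') := (Real.rpow_add hTpos _ _).symm
      _ = ((2:ℝ)^k) ^ (((1:ℝ)/2 - 1/p) + ((1:ℝ) + -α)) := by
          congr 1
          rw [hq'inv]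
          have : 1/q - 1/p = α - 1 := by linarith
          linarith
      _ = ((2:ℝ)^k) ^ ((1:ℝ)/2 - 1/p) * ((2:ℝ)^k) * ((2:ℝ)^k)^(-α) := by
          rw [Real.rpow_add hTpos, Real.rpow_add hTpos, Real.rpow_one]
          ring
  have hmain : ENNReal.ofReal ((1 - (2:ℝ)^(-α))⁻¹) * ENNReal.ofReal (|H| * c2)
      * ENNReal.ofReal (c2 * ((2:ℝ)^k) ^ ((1:ℝ)/q'))
      = ENNReal.ofReal |∫ x, Fc x * haarOne k j x| := by
    rw [habsA, ← ENNReal.ofReal_mul hCpos.le, ← ENNReal.ofReal_mul (by positivity)]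
    congr 1
    rw [hkey]
    ring
  have hNq0 : ENNReal.ofReal (c2 * ((2:ℝ)^k) ^ ((1:ℝ)/q')) ≠ 0 :=
    (ENNReal.ofReal_pos.2 (by positivity)).ne'
  have hcancel : ENNReal.ofReal ((1 - (2:ℝ)^(-α))⁻¹) * ENNReal.ofReal (|H| * c2)
      ≤ eLpNorm Fc (ENNReal.ofReal q) volume := by
    rw [← ENNReal.mul_le_mul_iff_left hNq0 ENNReal.ofReal_ne_top, hmain]
    exact hHolder
  apply le_trans hcancel
  exact le_iSup (fun (g : {f : ℝ → ℝ // eLpNorm f (ENNReal.ofReal p) volume ≤ 1}) =>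
    eLpNorm (fun x => b x * riesz α g.1 x - riesz α (fun y => b y * g.1 y) x)
      (ENNReal.ofReal q) volume) ⟨f, hfle⟩



/-- ‖[M_b, I_α]‖_(L^p→L^q) ≳ sup_I |⟨b,h_I⟩|/|I|^(1/2). -/
theorem stmt12 (α p q : ℝ) (hα0 : 0 < α) (hα1 : α < 1)
    (hind : 1 - α + 1 / q = 1 / p) (hp : 1 < p) (hpq : p < q) :
    ∃ c : ℝ≥0∞, 0 < c ∧ ∀ b : ℝ → ℝ, LocallyIntegrable b volume →
      c * haarSup b ≤ commN α p q b := by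
  obtain ⟨c, hc, hmain⟩ := stmt12_aux α p q hα0 hα1 hind hp hpq
  exact ⟨c, hc, fun b hb => hmain b hb⟩
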